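/- Let x, y ∈ SU(2) satisfy [x,y] = −I. Then x⁴ = I, x² = y² = −I, and the subgroup of SU(2) generated by x and y is isomorphic to the quaternion group Q_8 of order eight. -/

import Mathlib

/-!
Common setup: the special unitary group `SU(p)`, the central product
`G_{m,p} = SU(p)^m / Δ(Z/p)`, the space `Hom(Z^n, G)` of commuting `n`-tuples,
and the moduli space `Rep(Z^n, G) = Hom(Z^n, G)/G`.
-/

/-- The special unitary group `SU(p)`: the subgroup of the unitary group of `p × p`
complex matrices consisting of the matrices of determinant `1`. -/
def SUgrp (p : ℕ) : Subgroup (Matrix.unitaryGroup (Fin p) ℂ) :=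
  MonoidHom.ker (Matrix.detMonoidHom.comp (Matrix.unitaryGroup (Fin p) ℂ).subtype)

/-- `SU p` as a topological group (topologized as a subspace of the matrices). -/
abbrev SU (p : ℕ) : Type := SUgrp p

/-- The underlying `p × p` complex matrix of an element of `SU p`. -/
noncomputable def SU.mat {p : ℕ} (x : SU p) : Matrix (Fin p) (Fin p) ℂ :=
  ((x : Matrix.unitaryGroup (Fin p) ℂ) : Matrix (Fin p) (Fin p) ℂ)

/-- The diagonal embedding of a group into an `m`-fold product. -/
def diagHom (G : Type*) [Group G] (m : ℕ) : G →* (Fin m → G) where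
  toFun g := fun _ => g
  map_one' := rfl
  map_mul' _ _ := rfl

/-- The diagonal central subgroup `Δ(Z/p) ⊆ SU(p)^m`, consisting of the constant tuples
`(z, ..., z)` with `z` in the center of `SU(p)`. -/
def DeltaZp (p m : ℕ) : Subgroup (Fin m → SU p) :=
  (Subgroup.center (SU p)).map (diagHom (SU p) m)

instance DeltaZp.normal (p m : ℕ) : (DeltaZp p m).Normal := by
  constructor
  intro x hx g
  obtain ⟨z, hz, rfl⟩ := hx
  refine ⟨z, hz, ?_⟩
  funext i
  simp only [diagHom, MonoidHom.coe_mk, OneHom.coe_mk, Pi.mul_apply, Pi.inv_apply]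
  rw [SetLike.mem_coe, Subgroup.mem_center_iff] at hz
  rw [hz (g i), mul_assoc, mul_inv_cancel, mul_one]

/-- The central product `G_{m,p} = SU(p)^m / Δ(Z/p)`, a topological group with the
quotient topology. -/
abbrev Gmp (p m : ℕ) : Type := (Fin m → SU p) ⧸ DeltaZp p m

/-- `Hom(Z^n, G)`: the space of commuting `n`-tuples in `G`, topologized as a subspace
of `G^n`. -/
def commTuples (G : Type*) [Group G] (n : ℕ) : Set (Fin n → G) :=
  {f | ∀ i j, Commute (f i) (f j)}

/-- The trivial commuting tuple `(1, ..., 1)`. -/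
def trivTuple (G : Type*) [Group G] (n : ℕ) : commTuples G n :=
  ⟨fun _ => 1, fun _ _ => Commute.one_left 1⟩

/-- The simultaneous-conjugation equivalence relation on the space of commuting
`n`-tuples in `G`. -/
def conjSetoid (G : Type*) [Group G] (n : ℕ) : Setoid (commTuples G n) where
  r x y := ∃ g : G, ∀ i, (y : Fin n → G) i = g * (x : Fin n → G) i * g⁻¹
  iseqv := by
    constructor
    · exact fun x => ⟨1, fun i => by group⟩
    · rintro x y ⟨g, hg⟩
      exact ⟨g⁻¹, fun i => by rw [hg i]; group⟩
    · rintro x y z ⟨g, hg⟩ ⟨h, hh⟩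
      exact ⟨h * g, fun i => by rw [hh i, hg i]; group⟩

/-- `Rep(Z^n, G) = Hom(Z^n, G)/G`: the quotient of the space of commuting `n`-tuples by
simultaneous conjugation, with the quotient topology. -/
abbrev RepSpace (G : Type*) [Group G] [TopologicalSpace G] (n : ℕ) : Type _ :=
  Quotient (conjSetoid G n)

/-- `N(n,m,p) = p^((m-1)(n-2))·(p^n − 1)·(p^(n-1) − 1)/(p² − 1) + 1` (the division is exact). -/
def Ncomp (n m p : ℕ) : ℕ :=
  p ^ ((m - 1) * (n - 2)) * (p ^ n - 1) * (p ^ (n - 1) - 1) / (p ^ 2 - 1) + 1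

open scoped commutatorElement

/-!
If `⁅x, y⁆ = -1` in `SU(2)`, the matrices `X, Y` anticommute, so conjugating by `Y` negates `X`
and `tr X = 0`; since `det X = 1`, Cayley–Hamilton gives `X² = -1`, and likewise `Y² = -1`.
Hence `x` has order `4`, `y² = x²` and `x y x = y`: these are the defining relations of `Q₈`,
so `a i ↦ xⁱ`, `xa i ↦ y xⁱ` is a homomorphism onto `⟨x, y⟩`. It is injective because `x` has
order exactly `4` and `y ∉ ⟨x⟩` (otherwise `x` and `y` would commute).
-/

theorem Matrix.trace_eq_zero_of_mul_eq_neg_mul {n R : Type*} [Fintype n] [DecidableEq n]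
    [CommRing R] [IsAddTorsionFree R] {X Y : Matrix n n R} (hY : IsUnit Y.det)
    (h : X * Y = -(Y * X)) : X.trace = 0 := by
  refine self_eq_neg.mp ?_
  calc X.trace = (Y⁻¹ * (X * Y)).trace := by
        rw [Matrix.trace_mul_comm, mul_assoc, Matrix.mul_nonsing_inv _ hY, mul_one]
    _ = -X.trace := by
        rw [h, Matrix.mul_neg, Matrix.trace_neg, ← mul_assoc, Matrix.nonsing_inv_mul _ hY,
          one_mul]

theorem Matrix.sq_eq_neg_det_smul_one_of_trace_eq_zero {R : Type*} [CommRing R] [Nontrivial R]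
    {M : Matrix (Fin 2) (Fin 2) R} (h : M.trace = 0) : M ^ 2 = -(M.det • 1) := by
  have := M.aeval_self_charpoly
  rw [Matrix.charpoly_fin_two, h] at this
  simpa [Algebra.algebraMap_eq_smul_one, ← eq_neg_iff_add_eq_zero] using this

namespace SU

variable {p : ℕ}

noncomputable def matHom : SU p →* Matrix (Fin p) (Fin p) ℂ where
  toFun := mat
  map_one' := rfl
  map_mul' _ _ := rfl

theorem mat_injective : Function.Injective (mat (p := p)) :=
  fun _ _ h => Subtype.ext (Subtype.ext h)

theorem mat_mul (x y : SU p) : (x * y).mat = x.mat * y.mat := rfl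

theorem mat_pow (x : SU p) (k : ℕ) : (x ^ k).mat = x.mat ^ k := map_pow matHom x k

theorem det_mat (x : SU p) : x.mat.det = 1 := x.2

theorem ne_one_of_mat_eq_neg_one [NeZero p] {x : SU p} (h : x.mat = -1) : x ≠ 1 := by
  rintro rfl
  have := congrFun (congrFun h 0) 0
  norm_num [mat] at this

theorem mat_mul_eq_neg_mul_of_mat_commutatorElement_eq_neg_one {x y : SU p}
    (h : ⁅x, y⁆.mat = -1) : x.mat * y.mat = -(y.mat * x.mat) := by
  rw [← mat_mul, ← mat_mul, show x * y = ⁅x, y⁆ * (y * x) by group, mat_mul, h, neg_one_mul]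

theorem mat_sq_eq_neg_one_of_mul_eq_neg_mul {x y : SU 2} (h : x.mat * y.mat = -(y.mat * x.mat)) :
    (x ^ 2).mat = -1 := by
  have htrace := Matrix.trace_eq_zero_of_mul_eq_neg_mul (by simp [det_mat]) h
  rw [mat_pow, Matrix.sq_eq_neg_det_smul_one_of_trace_eq_zero htrace, det_mat, one_smul]

end SU

theorem zpow_eq_zpow_of_intCast_eq {G : Type*} [Group G] {x : G} {m : ℕ} (hx : x ^ m = 1)
    {a b : ℤ} (h : (a : ZMod m) = b) : x ^ a = x ^ b :=
  zpow_eq_zpow_iff_modEq.mpr <| ((ZMod.intCast_eq_intCast_iff a b m).mp h).of_dvd <|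
    Int.natCast_dvd_natCast.mpr (orderOf_dvd_of_pow_eq_one hx)

namespace QuaternionGroup

variable {G : Type*} [Group G] {n : ℕ} {x y : G}

/-- `QuaternionGroup n = ⟨a, b | a^{2n} = 1, b² = aⁿ, a b a = b⟩` with `a = a 1`, `b = xa 0`;
this is the homomorphism sending `a ↦ x`, `b ↦ y`. -/
def lift (hx : x ^ (2 * n) = 1) (hy : y ^ 2 = x ^ n) (hxyx : x * y * x = y) :
    QuaternionGroup n →* G where
  toFun
    | a i => x ^ (i.cast : ℤ)
    | xa i => y * x ^ (i.cast : ℤ)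
  map_one' := by
    show x ^ ((0 : ZMod (2 * n)).cast : ℤ) = 1
    rw [ZMod.cast_zero, zpow_zero]
  map_mul' := by
    have hcongr {a b : ℤ} (h : (a : ZMod (2 * n)) = b) : x ^ a = x ^ b :=
      zpow_eq_zpow_of_intCast_eq hx h
    have hconj (k : ℤ) : x ^ k * y = y * x ^ (-k) := by
      have : SemiconjBy y x⁻¹ x := (eq_mul_inv_of_mul_eq hxyx).symm
      rw [← inv_zpow', (this.zpow_right k).eq]
    rintro (i | i) (j | j)
    · rw [a_mul_a, ← zpow_add]
      exact hcongr (by push_cast [ZMod.intCast_zmod_cast]; ring)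
    · rw [a_mul_xa, ← mul_assoc, hconj, mul_assoc, ← zpow_add]
      exact congrArg _ (hcongr (by push_cast [ZMod.intCast_zmod_cast]; ring))
    · rw [xa_mul_a, mul_assoc, ← zpow_add]
      exact congrArg _ (hcongr (by push_cast [ZMod.intCast_zmod_cast]; ring))
    · rw [xa_mul_xa, mul_assoc y, ← mul_assoc _ y, hconj, ← mul_assoc, ← mul_assoc, ← sq, hy,
        mul_assoc, ← zpow_natCast, ← zpow_add, ← zpow_add]
      exact hcongr (by push_cast [ZMod.intCast_zmod_cast]; ring)

variable (hx : x ^ (2 * n) = 1) (hy : y ^ 2 = x ^ n) (hxyx : x * y * x = y)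

@[simp]
theorem lift_a (i : ZMod (2 * n)) : lift hx hy hxyx (a i) = x ^ (i.cast : ℤ) := rfl

@[simp]
theorem lift_xa (i : ZMod (2 * n)) : lift hx hy hxyx (xa i) = y * x ^ (i.cast : ℤ) := rfl

theorem range_lift : (lift hx hy hxyx).range = Subgroup.closure {x, y} := by
  have hx_mem : x ∈ Subgroup.closure {x, y} := Subgroup.subset_closure (by simp)
  have hy_mem : y ∈ Subgroup.closure {x, y} := Subgroup.subset_closure (by simp)
  apply le_antisymm
  · rintro _ ⟨i | i, rfl⟩
    · exact Subgroup.zpow_mem _ hx_mem _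
    · exact Subgroup.mul_mem _ hy_mem (Subgroup.zpow_mem _ hx_mem _)
  · rw [Subgroup.closure_le]
    rintro g (rfl | rfl)
    · refine ⟨a 1, ?_⟩
      rw [lift_a, zpow_eq_zpow_of_intCast_eq hx (b := 1) (by simp), zpow_one]
    · exact ⟨xa 0, by simp⟩

theorem lift_injective (hord : orderOf x = 2 * n) (hy_notMem : y ∉ Subgroup.zpowers x) :
    Function.Injective (lift hx hy hxyx) := by
  refine (injective_iff_map_eq_one _).mpr ?_
  rintro (i | i) h
  · rw [lift_a, ← orderOf_dvd_iff_zpow_eq_one, hord, ← ZMod.intCast_zmod_eq_zero_iff_dvd,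
      ZMod.intCast_zmod_cast] at h
    rw [h, a_zero]
  · refine absurd (Subgroup.mem_zpowers_iff.mpr ⟨-(i.cast : ℤ), ?_⟩) hy_notMem
    rw [zpow_neg, ← eq_inv_of_mul_eq_one_left h]

end QuaternionGroup

/-- If `x, y ∈ SU(2)` satisfy `⁅x,y⁆ = -I`, then `x⁴ = I`, `x² = y² = -I`, and the
subgroup generated by `x` and `y` is isomorphic to the quaternion group `Q₈`. -/
theorem commutator_neg_one_gives_quaternion (x y : SU 2) (hxy : SU.mat ⁅x, y⁆ = -1) :
    x ^ 4 = 1 ∧ SU.mat (x ^ 2) = -1 ∧ SU.mat (y ^ 2) = -1 ∧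
    Nonempty ((Subgroup.closure {x, y}) ≃* QuaternionGroup 2) := by
  have hanti : x.mat * y.mat = -(y.mat * x.mat) :=
    SU.mat_mul_eq_neg_mul_of_mat_commutatorElement_eq_neg_one hxy
  have hx2 : (x ^ 2).mat = -1 := SU.mat_sq_eq_neg_one_of_mul_eq_neg_mul hanti
  have hy2 : (y ^ 2).mat = -1 := SU.mat_sq_eq_neg_one_of_mul_eq_neg_mul (by rw [hanti, neg_neg])
  have hx4 : x ^ (2 * 2) = 1 :=
    SU.mat_injective (by rw [pow_mul, SU.mat_pow, hx2, neg_one_sq]; rfl)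
  have hord : orderOf x = 2 * 2 :=
    orderOf_eq_prime_pow (p := 2) (n := 1) (SU.ne_one_of_mat_eq_neg_one hx2) hx4
  have hxyx : x * y * x = y := SU.mat_injective <| by
    rw [SU.mat_mul, SU.mat_mul, hanti, neg_mul, mul_assoc, ← sq, ← SU.mat_pow, hx2, mul_neg_one,
      neg_neg]
  have hy_notMem : y ∉ Subgroup.zpowers x := by
    rintro ⟨k, rfl⟩
    exact SU.ne_one_of_mat_eq_neg_one hxy
      (commutatorElement_eq_one_iff_commute.mpr ((Commute.refl x).zpow_right k))
  refine ⟨hx4, hx2, hy2, ⟨?_⟩⟩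
  have hy : y ^ 2 = x ^ 2 := SU.mat_injective (hy2.trans hx2.symm)
  exact ((MonoidHom.ofInjective (QuaternionGroup.lift_injective hx4 hy hxyx hord hy_notMem)).trans
    (MulEquiv.subgroupCongr (QuaternionGroup.range_lift hx4 hy hxyx))).symm
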